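/- For every integer n ≥ 6, there exists a planar graph G on n vertices with ⌈5n/2⌉ − 5 edges that contains no two vertex-disjoint triangles; consequently ex_P(n, 2C_3) ≥ ⌈5n/2⌉ − 5. -/

import Mathlib

/-!
The witness is the wheel with hub `0` and rim cycle `1, 2, …, n - 1`, plus the chords from `1` to
the even vertices `4, 6, …, ≤ n - 3`. It has `(n - 1) + (n - 1) + ⌊(n - 5) / 2⌋ = ⌈5n/2⌉ - 5` edges.
Rim and chords contain no triangle, so every triangle passes through the hub and no two triangles
are disjoint. Placing the vertices on a line in the order `0, 1, …, n - 1`, the edges `1b` with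
`b ≥ 3` share the endpoint `1` and the remaining edges are nested or disjoint intervals: a two-page
book embedding. Drawing every edge as a semicircle over the line, above or below according to its
page, makes the graph planar, since two semicircles on the same side meet only if their diameters
interleave.
-/

open SimpleGraph

/-- A graph is planar if it admits a drawing in the plane: vertices are mapped to distinct
points, each edge is drawn as a simple continuous arc between the images of its endpoints,
the interior of each arc avoids all vertex images, and the interiors of arcs of distinct
edges are pairwise disjoint. -/
def IsPlanar {V : Type*} (G : SimpleGraph V) : Prop :=
  ∃ (pos : V → ℝ × ℝ) (arc : V → V → ℝ → ℝ × ℝ),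
    Function.Injective pos ∧
    (∀ u v, G.Adj u v →
      Continuous (arc u v) ∧
      arc u v 0 = pos u ∧ arc u v 1 = pos v ∧
      Set.InjOn (arc u v) (Set.Icc 0 1) ∧
      (∀ t ∈ Set.Ioo (0:ℝ) 1, ∀ w, arc u v t ≠ pos w) ∧
      (∀ t, arc u v t = arc v u (1 - t))) ∧
    (∀ u v x y, G.Adj u v → G.Adj x y → s(u, v) ≠ s(x, y) →
      ∀ s ∈ Set.Ioo (0:ℝ) 1, ∀ t ∈ Set.Ioo (0:ℝ) 1, arc u v s ≠ arc x y t)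

/-- `G` contains a copy of `H` (i.e. a subgraph isomorphic to `H`). -/
def ContainsCopy {V W : Type*} (G : SimpleGraph V) (H : SimpleGraph W) : Prop :=
  ∃ f : H →g G, Function.Injective f

/-- The planar Turán number: the maximum number of edges of an `H`-free planar graph
on `n` vertices. -/
noncomputable def exP {W : Type*} (n : ℕ) (H : SimpleGraph W) : ℕ :=
  sSup {m | ∃ G : SimpleGraph (Fin n), IsPlanar G ∧ ¬ ContainsCopy G H ∧ G.edgeSet.ncard = m}

/-- The disjoint union of `t` copies of `G`. -/
def copies {V : Type*} (t : ℕ) (G : SimpleGraph V) : SimpleGraph (Fin t × V) where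
  Adj x y := x.1 = y.1 ∧ G.Adj x.2 y.2
  symm := by constructor; rintro ⟨i, a⟩ ⟨j, b⟩ ⟨h1, h2⟩; exact ⟨h1.symm, h2.symm⟩
  loopless := by constructor; rintro ⟨i, a⟩ ⟨_, h⟩; exact G.irrefl h

/-- `C_k^+`: the cycle on `k` vertices together with one pendant edge. -/
def cyclePlus (k : ℕ) : SimpleGraph (Fin k ⊕ Unit) :=
  SimpleGraph.fromRel (fun x y =>
    (∃ a b : Fin k, x = Sum.inl a ∧ y = Sum.inl b ∧ (cycleGraph k).Adj a b) ∨
    (∃ a : Fin k, (a : ℕ) = 0 ∧ x = Sum.inl a ∧ y = Sum.inr ()))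

open Real Set

/-- The semicircle with diameter `[a, b]`, above the real axis if `up` and below it otherwise,
run from `a` (at `t = 0`) to `b` (at `t = 1`). -/
noncomputable def semicircle (a b : ℝ) (up : Bool) (t : ℝ) : ℝ × ℝ :=
  ((a + b) / 2 - (b - a) / 2 * cos (π * t), (if up then 1 else -1) * (|b - a| / 2) * sin (π * t))

section Semicircle

variable {a b : ℝ} {up : Bool} {t : ℝ}

lemma continuous_semicircle : Continuous (semicircle a b up) := by
  unfold semicircle; fun_prop

@[simp] lemma semicircle_zero : semicircle a b up 0 = (a, 0) := by
  simp [semicircle]; ring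

@[simp] lemma semicircle_one : semicircle a b up 1 = (b, 0) := by
  simp [semicircle]; ring

lemma semicircle_reverse : semicircle b a up (1 - t) = semicircle a b up t := by
  have h : π * (1 - t) = π - π * t := by ring
  simp only [semicircle, h, cos_pi_sub, sin_pi_sub, abs_sub_comm a b]
  congr 1; ring

lemma injOn_semicircle (hab : a ≠ b) : InjOn (semicircle a b up) (Icc 0 1) := by
  have hπ : ∀ {s : ℝ}, s ∈ Icc (0 : ℝ) 1 → π * s ∈ Icc 0 π := fun hs =>
    ⟨by nlinarith [pi_pos, hs.1], by nlinarith [pi_pos, hs.2]⟩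
  intro s hs t ht hst
  have hcos : cos (π * s) = cos (π * t) := by
    have h := congrArg Prod.fst hst
    simp only [semicircle] at h
    have : (b - a) / 2 ≠ 0 := by intro h0; apply hab; linarith
    exact mul_left_cancel₀ this (by linarith)
  exact mul_left_cancel₀ pi_ne_zero (injOn_cos (hπ hs) (hπ ht) hcos)

lemma sin_pi_mul_pos (ht : t ∈ Ioo 0 1) : 0 < sin (π * t) :=
  sin_pos_of_pos_of_lt_pi (by nlinarith [pi_pos, ht.1]) (by nlinarith [pi_pos, ht.2])

lemma radius_mul_sin_pos (hab : a ≠ b) (ht : t ∈ Ioo 0 1) : 0 < |b - a| / 2 * sin (π * t) := by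
  have := sub_ne_zero.mpr hab.symm
  have := sin_pi_mul_pos ht
  positivity

lemma semicircle_snd_pos_iff (hab : a ≠ b) (ht : t ∈ Ioo 0 1) :
    0 < (semicircle a b up t).2 ↔ up = true := by
  have := radius_mul_sin_pos hab ht
  cases up
  · simp only [semicircle, Bool.false_eq_true, if_false, iff_false, not_lt]; linarith
  · simp only [semicircle, if_true, iff_true]; linarith

lemma semicircle_snd_ne_zero (hab : a ≠ b) (ht : t ∈ Ioo 0 1) : (semicircle a b up t).2 ≠ 0 := by
  have := radius_mul_sin_pos hab ht
  cases up
  · simp only [semicircle, Bool.false_eq_true, if_false]; linarith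
  · simp only [semicircle, if_true]; linarith

lemma semicircle_mem_circle :
    ((semicircle a b up t).1 - a) * ((semicircle a b up t).1 - b) + (semicircle a b up t).2 ^ 2 =
      0 := by
  have hsgn : (if up then (1 : ℝ) else -1) ^ 2 = 1 := by split <;> norm_num
  simp only [semicircle, mul_pow, hsgn, div_pow, sq_abs]
  linear_combination ((b - a) ^ 2 / 4) * sin_sq_add_cos_sq (π * t)

end Semicircle

lemma mem_Ioo_of_circle {a b X Y : ℝ} (hab : a < b) (h : (X - a) * (X - b) + Y ^ 2 = 0)
    (hY : Y ≠ 0) : X ∈ Ioo a b := by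
  have hY2 : 0 < Y ^ 2 := by positivity
  constructor <;> by_contra! hX <;> nlinarith

lemma eq_or_interleave_of_circle {a b c d X Y : ℝ} (hab : a < b) (hcd : c < d)
    (h₁ : (X - a) * (X - b) + Y ^ 2 = 0) (h₂ : (X - c) * (X - d) + Y ^ 2 = 0) (hY : Y ≠ 0) :
    (a = c ∧ b = d) ∨ (a < c ∧ c < b ∧ b < d) ∨ (c < a ∧ a < d ∧ d < b) := by
  obtain ⟨hXa, hXb⟩ := mem_Ioo_of_circle hab h₁ hY
  obtain ⟨hXc, hXd⟩ := mem_Ioo_of_circle hcd h₂ hY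
  rcases lt_trichotomy a c with hac | rfl | hac <;> rcases lt_trichotomy b d with hbd | rfl | hbd
  all_goals first
    | exact Or.inl ⟨rfl, rfl⟩
    | exact Or.inr (Or.inl ⟨hac, by linarith, hbd⟩)
    | exact Or.inr (Or.inr ⟨hac, by linarith, hbd⟩)
    | nlinarith [mul_pos (sub_pos.2 hXa) (sub_pos.2 hXb), mul_pos (sub_pos.2 hXc) (sub_pos.2 hXd)]

structure IsTwoPageBookEmbedding {V : Type*} (G : SimpleGraph V) (pos : V → ℝ)
    (page : Sym2 V → Bool) : Prop where
  injective : Function.Injective pos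
  not_interleave : ∀ u v x y, G.Adj u v → G.Adj x y → page s(u, v) = page s(x, y) →
    ¬ (pos u < pos x ∧ pos x < pos v ∧ pos v < pos y)

namespace IsTwoPageBookEmbedding

variable {V : Type*} {G : SimpleGraph V} {pos : V → ℝ} {page : Sym2 V → Bool}

lemma semicircle_ne (h : IsTwoPageBookEmbedding G pos page) {u v x y : V} (huv : G.Adj u v)
    (hxy : G.Adj x y) (hne : s(u, v) ≠ s(x, y)) (hlt₁ : pos u < pos v) (hlt₂ : pos x < pos y)
    {s t : ℝ} (hs : s ∈ Ioo 0 1) (ht : t ∈ Ioo 0 1) :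
    semicircle (pos u) (pos v) (page s(u, v)) s ≠ semicircle (pos x) (pos y) (page s(x, y)) t := by
  intro heq
  have hpage : page s(u, v) = page s(x, y) := by
    rw [Bool.eq_iff_iff, ← semicircle_snd_pos_iff hlt₁.ne hs, ← semicircle_snd_pos_iff hlt₂.ne ht,
      heq]
  have hcircle := semicircle_mem_circle (a := pos u) (b := pos v) (up := page s(u, v)) (t := s)
  rw [heq] at hcircle
  rcases eq_or_interleave_of_circle hlt₁ hlt₂ hcircle semicircle_mem_circle
      (semicircle_snd_ne_zero hlt₂.ne ht) with ⟨hux, hvy⟩ | hcross | hcross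
  · exact hne (by rw [h.injective hux, h.injective hvy])
  · exact h.not_interleave u v x y huv hxy hpage hcross
  · exact h.not_interleave x y u v hxy huv hpage.symm hcross

theorem isPlanar (h : IsTwoPageBookEmbedding G pos page) : IsPlanar G := by
  have hrev : ∀ {s : ℝ}, s ∈ Ioo (0 : ℝ) 1 → 1 - s ∈ Ioo (0 : ℝ) 1 := fun hs =>
    ⟨by linarith [hs.2], by linarith [hs.1]⟩
  refine ⟨fun v => (pos v, 0), fun u v => semicircle (pos u) (pos v) (page s(u, v)), ?_, ?_, ?_⟩
  · exact fun u v huv => h.injective (congrArg Prod.fst huv)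
  · intro u v huv
    have hne : pos u ≠ pos v := h.injective.ne huv.ne
    refine ⟨continuous_semicircle, semicircle_zero, semicircle_one, injOn_semicircle hne,
      fun t ht w hw => semicircle_snd_ne_zero hne ht (congrArg Prod.snd hw), fun t => ?_⟩
    dsimp only
    rw [Sym2.eq_swap (a := v), semicircle_reverse]
  · intro u v x y huv hxy hne s hs t ht
    dsimp only
    wlog hlt₁ : pos u < pos v generalizing u v s
    · rw [← semicircle_reverse, Sym2.eq_swap]
      exact this v u huv.symm (by rwa [Sym2.eq_swap]) (1 - s) (hrev hs)
        (lt_of_le_of_ne (not_lt.1 hlt₁) (h.injective.ne huv.ne.symm))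
    wlog hlt₂ : pos x < pos y generalizing x y t
    · rw [← semicircle_reverse (a := pos x), Sym2.eq_swap (a := x)]
      exact this y x hxy.symm (1 - t) (hrev ht) (by rwa [Sym2.eq_swap (a := y)])
        (lt_of_le_of_ne (not_lt.1 hlt₂) (h.injective.ne hxy.ne.symm))
    exact h.semicircle_ne huv hxy hne hlt₁ hlt₂ hs ht

end IsTwoPageBookEmbedding

section GeneralGraphs

variable {V : Type*}

lemma not_containsCopy_two_triangles_of_forall_triangle_mem {G : SimpleGraph V} (v : V)
    (h : ∀ x y z, G.Adj x y → G.Adj y z → G.Adj x z → v = x ∨ v = y ∨ v = z) :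
    ¬ ContainsCopy G (copies 2 (cycleGraph 3)) := by
  rintro ⟨f, hf⟩
  have hC₃ : ∀ a b : Fin 3, a ≠ b → (cycleGraph 3).Adj a b := by decide
  have hadj : ∀ (i : Fin 2) (a b : Fin 3), a ≠ b → G.Adj (f (i, a)) (f (i, b)) := fun i a b hab =>
    f.map_adj ⟨rfl, hC₃ a b hab⟩
  have hv : ∀ i : Fin 2, ∃ a : Fin 3, f (i, a) = v := fun i => by
    rcases h _ _ _ (hadj i 0 1 (by decide)) (hadj i 1 2 (by decide)) (hadj i 0 2 (by decide))
      with h | h | h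
    exacts [⟨0, h.symm⟩, ⟨1, h.symm⟩, ⟨2, h.symm⟩]
  obtain ⟨a, ha⟩ := hv 0
  obtain ⟨b, hb⟩ := hv 1
  simpa using hf (ha.trans hb.symm)

lemma ncard_edgeSet_fromRel {r : V → V → Prop} (hr : ∀ a b, r a b → ¬ r b a) :
    (SimpleGraph.fromRel r).edgeSet.ncard = {p : V × V | r p.1 p.2}.ncard := by
  have hedge :
      (SimpleGraph.fromRel r).edgeSet = (fun p : V × V => s(p.1, p.2)) '' {p | r p.1 p.2} := by
    ext e
    induction e using Sym2.ind with
    | _ a b =>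
      simp only [SimpleGraph.mem_edgeSet, SimpleGraph.fromRel_adj, Set.mem_image, Set.mem_ofPred_eq,
        Prod.exists, Sym2.eq_iff]
      constructor
      · rintro ⟨-, hab | hba⟩
        exacts [⟨a, b, hab, Or.inl ⟨rfl, rfl⟩⟩, ⟨b, a, hba, Or.inr ⟨rfl, rfl⟩⟩]
      · rintro ⟨c, d, hcd, ⟨rfl, rfl⟩ | ⟨rfl, rfl⟩⟩
        · exact ⟨fun h => hr _ _ hcd (h ▸ hcd), Or.inl hcd⟩
        · exact ⟨fun h => hr _ _ hcd (h ▸ hcd), Or.inr hcd⟩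
  rw [hedge, Set.InjOn.ncard_image]
  rintro ⟨a, b⟩ hab ⟨c, d⟩ hcd he
  rcases Sym2.eq_iff.1 he with ⟨rfl, rfl⟩ | ⟨rfl, rfl⟩
  · rfl
  · exact (hr _ _ hab hcd).elim

lemma ncard_edgeSet_le_exP {W : Type*} {n : ℕ} {H : SimpleGraph W} {G : SimpleGraph (Fin n)}
    (hG : IsPlanar G) (hH : ¬ ContainsCopy G H) : G.edgeSet.ncard ≤ exP n H :=
  le_csSup ⟨Nat.card (Sym2 (Fin n)), by rintro m ⟨G', -, -, rfl⟩; exact Set.ncard_le_card _⟩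
    ⟨G, hG, hH, rfl⟩

end GeneralGraphs

/-- The wheel with hub `0` and rim `1, 2, …, n - 1`, plus the chords from `1` to the even vertices
`4, 6, …, ≤ n - 3`; each edge is listed once, as `a < b`. -/
def wheelChordRel (n a b : ℕ) : Prop :=
  (a = 0 ∧ 0 < b ∧ b < n) ∨ (0 < a ∧ b = a + 1 ∧ b < n) ∨ (a = 1 ∧ b = n - 1) ∨
    (a = 1 ∧ b % 2 = 0 ∧ 4 ≤ b ∧ b ≤ n - 3)

lemma wheelChordRel.lt {n a b : ℕ} (hn : 3 ≤ n) (h : wheelChordRel n a b) : a < b ∧ b < n := by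
  unfold wheelChordRel at h; omega

lemma setOf_wheelChordRel {n : ℕ} (hn : 4 ≤ n) : {p : ℕ × ℕ | wheelChordRel n p.1 p.2} =
    (fun b => (0, b)) '' Ico 1 n ∪ (fun a => (a, a + 1)) '' Ico 1 (n - 1) ∪ {(1, n - 1)} ∪
      (fun k => (1, 2 * k + 4)) '' Iio ((n - 5) / 2) := by
  ext ⟨a, b⟩
  simp only [wheelChordRel, Set.mem_ofPred_eq, Set.mem_union, Set.mem_image, Set.mem_Ico,
    Set.mem_Iio, Set.mem_singleton_iff, Prod.mk.injEq]
  constructor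
  · rintro (h | h | h | ⟨rfl, h⟩)
    · exact Or.inl <| Or.inl <| Or.inl ⟨b, by omega, h.1.symm, rfl⟩
    · exact Or.inl <| Or.inl <| Or.inr ⟨a, by omega, rfl, h.2.1.symm⟩
    · exact Or.inl <| Or.inr h
    · exact Or.inr ⟨(b - 4) / 2, by omega, rfl, by omega⟩
  · rintro (((⟨b, hb, rfl, rfl⟩ | ⟨a, ha, rfl, rfl⟩) | h) | ⟨k, hk, rfl, rfl⟩) <;> omega

lemma ncard_setOf_wheelChordRel {n : ℕ} (hn : 5 ≤ n) :
    {p : ℕ × ℕ | wheelChordRel n p.1 p.2}.ncard = 2 * n - 2 + (n - 5) / 2 := by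
  rw [setOf_wheelChordRel (by omega), Set.ncard_union_eq, Set.ncard_union_eq, Set.ncard_union_eq,
    Set.ncard_image_of_injective _ (fun _ _ h => (Prod.mk.inj h).2),
    Set.ncard_image_of_injective _ (fun _ _ h => (Prod.mk.inj h).1),
    Set.ncard_image_of_injective _ (fun _ _ h => by simpa using (Prod.mk.inj h).2),
    Set.ncard_singleton, Set.ncard_Ico_nat, Set.ncard_Ico_nat, Set.ncard_Iio_nat]
  · omega
  all_goals
    simp only [Set.disjoint_left, Set.mem_union, Set.mem_image, Set.mem_Ico, Set.mem_Iio,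
      Set.mem_singleton_iff, or_imp, forall_exists_index, and_imp, forall_and, Prod.forall,
      Prod.mk.injEq, not_exists, not_and]
    repeat' apply And.intro
    all_goals intros; omega

def wheelChordGraph (n : ℕ) : SimpleGraph (Fin n) :=
  SimpleGraph.fromRel fun x y => wheelChordRel n x y

def wheelChordPage (n : ℕ) : Sym2 (Fin n) → Bool :=
  Sym2.lift ⟨fun u v => decide (min u.val v.val = 1 ∧ 3 ≤ max u.val v.val),
    fun u v => by simp only [min_comm, max_comm]⟩

namespace wheelChordGraph

variable {n : ℕ}

lemma isTwoPageBookEmbedding :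
    IsTwoPageBookEmbedding (wheelChordGraph n) (fun x => ((x : ℕ) : ℝ)) (wheelChordPage n) where
  injective _ _ h := Fin.ext (Nat.cast_injective h)
  not_interleave u v x y huv hxy hpage hcross := by
    simp only [Nat.cast_lt] at hcross
    simp only [wheelChordGraph, SimpleGraph.fromRel_adj, wheelChordRel, wheelChordPage,
      Sym2.lift_mk, decide_eq_decide] at huv hxy hpage
    omega

lemma triangle_mem_zero (hn : 5 ≤ n) {x y z : Fin n} (hxy : (wheelChordGraph n).Adj x y)
    (hyz : (wheelChordGraph n).Adj y z) (hxz : (wheelChordGraph n).Adj x z) :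
    ⟨0, by omega⟩ = x ∨ ⟨0, by omega⟩ = y ∨ ⟨0, by omega⟩ = z := by
  simp only [wheelChordGraph, SimpleGraph.fromRel_adj, wheelChordRel] at hxy hyz hxz
  simp only [Fin.ext_iff]
  omega

lemma ncard_edgeSet (hn : 5 ≤ n) :
    (wheelChordGraph n).edgeSet.ncard = 2 * n - 2 + (n - 5) / 2 := by
  have hval : Function.Injective (Prod.map Fin.val Fin.val : Fin n × Fin n → ℕ × ℕ) :=
    Fin.val_injective.prodMap Fin.val_injective
  have himage : Prod.map Fin.val Fin.val '' {p : Fin n × Fin n | wheelChordRel n p.1 p.2} =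
      {p : ℕ × ℕ | wheelChordRel n p.1 p.2} := by
    ext ⟨a, b⟩
    constructor
    · rintro ⟨⟨x, y⟩, h, he⟩
      obtain ⟨rfl, rfl⟩ := Prod.mk.inj he
      exact h
    · intro h
      have := h.lt (by omega)
      exact ⟨(⟨a, by omega⟩, ⟨b, by omega⟩), h, rfl⟩
  rw [wheelChordGraph, ncard_edgeSet_fromRel fun a b h h' =>
      (h.lt (by omega)).1.not_gt (h'.lt (by omega)).1,
    ← Set.ncard_image_of_injective _ hval, himage, ncard_setOf_wheelChordRel hn]

end wheelChordGraph

lemma ceil_five_mul_div_two_sub_five {n : ℕ} (hn : 5 ≤ n) :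
    ⌈(5 * (n : ℚ) / 2)⌉ - 5 = ((2 * n - 2 + (n - 5) / 2 : ℕ) : ℤ) := by
  have h : 5 * (n : ℚ) / 2 = ((5 * n : ℕ) : ℚ) / ((2 : ℕ) : ℚ) := by push_cast; ring
  rw [h, Rat.ceil_natCast_div_natCast]
  push_cast
  omega

/-- For every `n ≥ 6`, there is a planar graph on `n` vertices with `⌈5n/2⌉ - 5` edges
containing no two vertex-disjoint triangles; consequently `ex_P(n, 2C₃) ≥ ⌈5n/2⌉ - 5`. -/
theorem stmt_19 (n : ℕ) (hn : 6 ≤ n) :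
    (∃ G : SimpleGraph (Fin n), IsPlanar G ∧ ¬ ContainsCopy G (copies 2 (cycleGraph 3)) ∧
      (G.edgeSet.ncard : ℤ) = ⌈(5 * (n : ℚ) / 2)⌉ - 5) ∧
    ⌈(5 * (n : ℚ) / 2)⌉ - 5 ≤ (exP n (copies 2 (cycleGraph 3)) : ℤ) := by
  have hplanar : IsPlanar (wheelChordGraph n) := wheelChordGraph.isTwoPageBookEmbedding.isPlanar
  have hfree : ¬ ContainsCopy (wheelChordGraph n) (copies 2 (cycleGraph 3)) :=
    not_containsCopy_two_triangles_of_forall_triangle_mem ⟨0, by omega⟩ fun _ _ _ =>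
      wheelChordGraph.triangle_mem_zero (by omega)
  have hcard : ((wheelChordGraph n).edgeSet.ncard : ℤ) = ⌈(5 * (n : ℚ) / 2)⌉ - 5 := by
    rw [wheelChordGraph.ncard_edgeSet (by omega), ceil_five_mul_div_two_sub_five (by omega)]
  exact ⟨⟨_, hplanar, hfree, hcard⟩, hcard ▸ Int.ofNat_le.2 (ncard_edgeSet_le_exP hplanar hfree)⟩
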